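/- Let i ∈ [1,n] and b = low(i). If b < i, then γ^1_{[1,2]}(i) = min{ γ^1_{[1,2]}(b,i:i), γ^1_{[1,2]}(b,i:i,j), γ^1_{[1,2]}(b,i:i,j',k'), γ^{11}_{[1,2]}(b,i:i,j',k') : b ≤ j < i, b ≤ k' < j' < i }. -/

import Mathlib

/-- `G` is a graph with vertex set `{1,…,n}` (all edges lie inside `{1,…,n}`),
whose adjacency satisfies the interval-graph numbering property: whenever
`i < j < k` and `i` is adjacent to `k`, then `j` is adjacent to `k`. -/
def GoodNumbering (G : SimpleGraph ℕ) (n : ℕ) : Prop :=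
  (∀ u v : ℕ, G.Adj u v → u ∈ Finset.Icc 1 n ∧ v ∈ Finset.Icc 1 n) ∧
  (∀ i j k : ℕ, i < j → j < k → G.Adj i k → G.Adj j k)

/-- `low a = min N[a]`, the minimum of the closed neighborhood of `a`. -/
noncomputable def low (G : SimpleGraph ℕ) (a : ℕ) : ℕ :=
  sInf {b : ℕ | b = a ∨ G.Adj a b}

/-- `lowI a b = min {low k : k ∈ [a,b]}`. -/
noncomputable def lowI (G : SimpleGraph ℕ) (a b : ℕ) : ℕ :=
  sInf (low G '' Set.Icc a b)

/-- `maxlow a = max {low k : low a ≤ k ≤ a}`. -/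
noncomputable def maxlow (G : SimpleGraph ℕ) (a : ℕ) : ℕ :=
  sSup (low G '' Set.Icc (low G a) a)

/-- `D` is a `[1,2]`-dominating set of the induced subgraph `G[1,i]`:
`D ⊆ [1,i]` and every vertex of `[1,i]` outside `D` has at least one and at
most two neighbors in `D`. -/
def Dom12 (G : SimpleGraph ℕ) (i : ℕ) (D : Finset ℕ) : Prop :=
  D ⊆ Finset.Icc 1 i ∧
  ∀ v ∈ Finset.Icc 1 i, v ∉ D →
    1 ≤ {u ∈ (D : Set ℕ) | G.Adj v u}.ncard ∧ {u ∈ (D : Set ℕ) | G.Adj v u}.ncard ≤ 2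

/-- The minimum (in `ℕ∞`, with `sInf ∅ = ⊤`) of the cardinalities of the
`[1,2]`-dominating sets `D` of `G[1,i]` satisfying the extra property `P`. -/
noncomputable def gval (G : SimpleGraph ℕ) (i : ℕ) (P : Finset ℕ → Prop) : ℕ∞ :=
  sInf {k : ℕ∞ | ∃ D : Finset ℕ, Dom12 G i D ∧ P D ∧ (D.card : ℕ∞) = k}

/-- `γ_{[1,2]}(i)`. -/
noncomputable def g12 (G : SimpleGraph ℕ) (i : ℕ) : ℕ∞ :=
  gval G i fun _ => True

/-- `γ⁰_{[1,2]}(j,i)`: no vertex of `[j,i]` is in `D`. -/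
noncomputable def g0I (G : SimpleGraph ℕ) (j i : ℕ) : ℕ∞ :=
  gval G i fun D => ∀ x ∈ Finset.Icc j i, x ∉ D

/-- `γ⁰_{[1,2]}(j,i:k)`: `k ∈ D` and no other vertex of `[j,i]` is in `D`. -/
noncomputable def g0Ik (G : SimpleGraph ℕ) (j i k : ℕ) : ℕ∞ :=
  gval G i fun D => k ∈ D ∧ ∀ x ∈ Finset.Icc j i, x ≠ k → x ∉ D

/-- `γ¹_{[1,2]}(i)`: `i ∈ D`. -/
noncomputable def g1 (G : SimpleGraph ℕ) (i : ℕ) : ℕ∞ :=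
  gval G i fun D => i ∈ D

/-- `γ¹_{[1,2]}(j,i:i)`: `i ∈ D` and no vertex of `[j,i)` is in `D`. -/
noncomputable def g1I (G : SimpleGraph ℕ) (j i : ℕ) : ℕ∞ :=
  gval G i fun D => i ∈ D ∧ ∀ x ∈ Finset.Ico j i, x ∉ D

/-- `γ¹_{[1,2]}(k,i:i,j)`: `i, j ∈ D` and no other vertex of `[k,i)` is in `D`. -/
noncomputable def g1Ij (G : SimpleGraph ℕ) (k i j : ℕ) : ℕ∞ :=
  gval G i fun D => i ∈ D ∧ j ∈ D ∧ ∀ x ∈ Finset.Ico k i, x ≠ j → x ∉ D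

/-- `γ¹_{[1,2]}(l,i:i,j,k)`: `i, j, k ∈ D` and no other vertex of `[l,i)` is in `D`. -/
noncomputable def g1Ijk (G : SimpleGraph ℕ) (l i j k : ℕ) : ℕ∞ :=
  gval G i fun D => i ∈ D ∧ j ∈ D ∧ k ∈ D ∧ ∀ x ∈ Finset.Ico l i, x ≠ j → x ≠ k → x ∉ D

/-- `γ¹¹_{[1,2]}(l,i:i,j,k)`: `i, j ∈ D`, all of `[l,k] ⊆ D`, and no vertex of
`(k,i)` other than `j` is in `D`. -/
noncomputable def g11Ijk (G : SimpleGraph ℕ) (l i j k : ℕ) : ℕ∞ :=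
  gval G i fun D => i ∈ D ∧ j ∈ D ∧ (∀ x ∈ Finset.Icc l k, x ∈ D) ∧
    ∀ x ∈ Finset.Ioo k i, x ≠ j → x ∉ D

/-!
Take a `[1,2]`-dominating set `D` of `G[1,i]` containing `i`, with `b = low(i) < i`. If `D` has a
gap in `[b,i)`, let `x` be the first one and keep only the vertices `z ∈ D` with `low(z) ≤ x`. The
numbering property makes every kept vertex above `x` a neighbour of `x`, and `x`, which is
outside `D` and adjacent to `i`, has at most one such neighbour besides `i`; the vertices that
lose a neighbour this way are adjacent to `i` and only see neighbours of `x`, so the smaller set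
is still `[1,2]`-dominating. Its trace on `[b,i)` is now an initial block `[b,x)` followed by at
most one vertex, which is one of the four restricted shapes.
-/

section

variable {G : SimpleGraph ℕ} {n i x : ℕ} {D : Finset ℕ}

theorem low_le_self (G : SimpleGraph ℕ) (a : ℕ) : low G a ≤ a :=
  Nat.sInf_le (Or.inl rfl)

theorem low_eq_or_adj (G : SimpleGraph ℕ) (a : ℕ) : low G a = a ∨ G.Adj a (low G a) :=
  Nat.sInf_mem (s := {b | b = a ∨ G.Adj a b}) ⟨a, Or.inl rfl⟩

theorem low_le_of_adj {a u : ℕ} (h : G.Adj a u) : low G a ≤ u :=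
  Nat.sInf_le (Or.inr h)

namespace GoodNumbering

theorem adj_of_low_le (hG : GoodNumbering G n) {z : ℕ} (hz : low G z ≤ x) (hxz : x < z) :
    G.Adj x z := by
  have hadj := ((low_eq_or_adj G z).resolve_left (by omega)).symm
  rcases hz.eq_or_lt with h | h
  · exact h ▸ hadj
  · exact hG.2 _ x z h hxz hadj

theorem one_le_low (hG : GoodNumbering G n) (h : low G i < i) : 1 ≤ low G i :=
  (Finset.mem_Icc.mp (hG.1 i _ ((low_eq_or_adj G i).resolve_left h.ne)).2).1

end GoodNumbering

theorem Dom12.ncard_le_two (hD : Dom12 G i D) (hx : x ∈ Finset.Icc 1 i) (hxD : x ∉ D) :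
    {u ∈ (D : Set ℕ) | G.Adj x u}.ncard ≤ 2 :=
  (hD.2 x hx hxD).2

theorem Dom12.eq_of_adj (hD : Dom12 G i D) (hx : x ∈ Finset.Icc 1 i) (hxD : x ∉ D)
    {u v w : ℕ} (hu : u ∈ D) (hv : v ∈ D) (hw : w ∈ D)
    (hxu : G.Adj x u) (hxv : G.Adj x v) (hxw : G.Adj x w) (huw : u ≠ w) (hvw : v ≠ w) :
    u = v := by
  by_contra huv
  have hsub : ({u, v, w} : Set ℕ) ⊆ {u ∈ (D : Set ℕ) | G.Adj x u} := by
    rintro y (rfl | rfl | rfl)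
    exacts [⟨hu, hxu⟩, ⟨hv, hxv⟩, ⟨hw, hxw⟩]
  have h3 : ({u, v, w} : Set ℕ).ncard = 3 := Set.ncard_eq_three.mpr ⟨u, v, w, huv, huw, hvw, rfl⟩
  have := Set.ncard_le_ncard hsub (D.finite_toSet.sep _)
  have := hD.ncard_le_two hx hxD
  omega

theorem GoodNumbering.dom12_filter_low_le (hG : GoodNumbering G n) (hD : Dom12 G i D)
    (hiD : i ∈ D) (hx : x ∈ Finset.Icc 1 i) (hix : low G i ≤ x) (hxD : x ∉ D) :
    Dom12 G i (D.filter (low G · ≤ x)) := by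
  refine ⟨(Finset.filter_subset _ _).trans hD.1, fun v hv hvD' => ?_⟩
  have hvi : v ≤ i := (Finset.mem_Icc.mp hv).2
  have hfin := (D.filter (low G · ≤ x)).finite_toSet.sep (G.Adj v)
  have hiD' : i ∈ D.filter (low G · ≤ x) := Finset.mem_filter.mpr ⟨hiD, hix⟩
  constructor
  · refine Nat.succ_le_of_lt ((Set.ncard_pos hfin).mpr ?_)
    by_cases hiv : low G i ≤ v
    · have hvi' : v < i := hvi.lt_of_ne (by rintro rfl; exact hvD' hiD')
      exact ⟨i, hiD', hG.adj_of_low_le hiv hvi'⟩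
    · have hvD : v ∉ D := fun hvD =>
        hvD' (Finset.mem_filter.mpr ⟨hvD, by have := low_le_self G v; omega⟩)
      obtain ⟨u, huD, hvu⟩ := (Set.ncard_pos (D.finite_toSet.sep _)).mp (hD.2 v hv hvD).1
      exact ⟨u, Finset.mem_filter.mpr ⟨huD, by have := low_le_of_adj hvu.symm; omega⟩, hvu⟩
  · by_cases hvD : v ∈ D
    · have hxv : x < low G v := by
        by_contra h
        exact hvD' (Finset.mem_filter.mpr ⟨hvD, by omega⟩)
      refine le_trans (Set.ncard_le_ncard ?_ (D.finite_toSet.sep _)) (hD.ncard_le_two hx hxD)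
      rintro u ⟨hu, hvu⟩
      obtain ⟨huD, hux⟩ := Finset.mem_filter.mp hu
      exact ⟨huD, hG.adj_of_low_le hux (hxv.trans_le (low_le_of_adj hvu))⟩
    · refine le_trans (Set.ncard_le_ncard ?_ (D.finite_toSet.sep _)) (hD.ncard_le_two hv hvD)
      exact fun u ⟨hu, hvu⟩ => ⟨(Finset.mem_filter.mp hu).1, hvu⟩

theorem gval_mono {P Q : Finset ℕ → Prop} (h : ∀ D, P D → Q D) : gval G i Q ≤ gval G i P :=
  sInf_le_sInf fun _ ⟨D, hD, hP, hcard⟩ => ⟨D, hD, h D hP, hcard⟩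

theorem gval_le_card {P : Finset ℕ → Prop} (hD : Dom12 G i D) (hP : P D) :
    gval G i P ≤ D.card :=
  sInf_le ⟨D, hD, hP, rfl⟩

noncomputable def g1Split (G : SimpleGraph ℕ) (b i : ℕ) : ℕ∞ :=
  sInf {v : ℕ∞ | v = g1I G b i ∨
    (∃ j ∈ Finset.Ico b i, v = g1Ij G b i j) ∨
    (∃ j' ∈ Finset.Ico b i, ∃ k' ∈ Finset.Ico b j',
      v = g1Ijk G b i j' k' ∨ v = g11Ijk G b i j' k')}

theorem g1Split_le_card_of_tail {b y e : ℕ} (hD : Dom12 G i D) (hiD : i ∈ D) (hby : b ≤ y)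
    (hblock : ∀ z ∈ Finset.Ico b y, z ∈ D) (heD : e ∈ D) (hye : y ≤ e) (hei : e < i)
    (htail : ∀ z ∈ Finset.Ico y i, z ∈ D → z = e) : g1Split G b i ≤ D.card := by
  rcases hby.eq_or_lt with rfl | hby
  · refine sInf_le_of_le (Or.inr (Or.inl ⟨e, Finset.mem_Ico.mpr ⟨hye, hei⟩, rfl⟩)) ?_
    exact gval_le_card hD ⟨hiD, heD, fun z hz hze hzD => hze (htail z hz hzD)⟩
  · refine sInf_le_of_le (Or.inr (Or.inr ⟨e, Finset.mem_Ico.mpr ⟨by omega, hei⟩, y - 1,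
      Finset.mem_Ico.mpr ⟨by omega, by omega⟩, Or.inr rfl⟩)) ?_
    refine gval_le_card hD ⟨hiD, heD, fun z hz => hblock z ?_,
      fun z hz hze hzD => hze (htail z ?_ hzD)⟩
    · simp only [Finset.mem_Icc, Finset.mem_Ico] at hz ⊢; omega
    · simp only [Finset.mem_Ioo, Finset.mem_Ico] at hz ⊢; omega

theorem g1Split_le_card_of_block {b y : ℕ} (hD : Dom12 G i D) (hiD : i ∈ D) (hby : b ≤ y)
    (hyi : y ≤ i) (hblock : ∀ z ∈ Finset.Ico b y, z ∈ D) (htail : ∀ z ∈ Finset.Ico y i, z ∉ D) :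
    g1Split G b i ≤ D.card := by
  rcases hby.eq_or_lt with rfl | hby
  · exact sInf_le_of_le (Or.inl rfl) (gval_le_card hD ⟨hiD, htail⟩)
  · have hlast : y - 1 ∈ Finset.Ico b y := Finset.mem_Ico.mpr ⟨by omega, by omega⟩
    refine g1Split_le_card_of_tail hD hiD (y := y - 1) (by omega)
      (fun z hz => hblock z ?_) (hblock _ hlast) le_rfl (by omega) fun z hz hzD => ?_
    · simp only [Finset.mem_Ico] at hz ⊢; omega
    · by_contra hz'
      exact htail z (by simp only [Finset.mem_Ico] at hz ⊢; omega) hzD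

theorem GoodNumbering.g1Split_le_card_of_gap (hG : GoodNumbering G n) (hb : low G i < i)
    (hD : Dom12 G i D) (hiD : i ∈ D) (hx : x ∈ Finset.Ico (low G i) i) (hxD : x ∉ D)
    (hblock : ∀ z ∈ Finset.Ico (low G i) x, z ∈ D) : g1Split G (low G i) i ≤ D.card := by
  obtain ⟨hix, hxi⟩ := Finset.mem_Ico.mp hx
  have hx1 : x ∈ Finset.Icc 1 i := Finset.mem_Icc.mpr ⟨(hG.one_le_low hb).trans hix, hxi.le⟩
  have hD' := hG.dom12_filter_low_le hD hiD hx1 hix hxD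
  have hiD' : i ∈ D.filter (low G · ≤ x) := Finset.mem_filter.mpr ⟨hiD, hix⟩
  have hblock' : ∀ z ∈ Finset.Ico (low G i) x, z ∈ D.filter (low G · ≤ x) := fun z hz =>
    Finset.mem_filter.mpr ⟨hblock z hz, (low_le_self G z).trans (Finset.mem_Ico.mp hz).2.le⟩
  have hadj : ∀ u ∈ Finset.Ico x i, u ∈ D.filter (low G · ≤ x) → u ∈ D ∧ G.Adj x u ∧ u ≠ i :=
    fun u hu huD' => by
      obtain ⟨huD, hux⟩ := Finset.mem_filter.mp huD'
      obtain ⟨hxu, hui⟩ := Finset.mem_Ico.mp hu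
      replace hxu : x < u := hxu.lt_of_ne (by rintro rfl; exact hxD huD)
      exact ⟨huD, hG.adj_of_low_le hux hxu, hui.ne⟩
  -- `x` is adjacent to `i`, so it has at most one neighbour in `D` strictly between `x` and `i`.
  have htail : ∀ u ∈ Finset.Ico x i, ∀ v ∈ Finset.Ico x i,
      u ∈ D.filter (low G · ≤ x) → v ∈ D.filter (low G · ≤ x) → u = v :=
    fun u hu v hv huD' hvD' =>
    have ⟨huD, hxu, hui⟩ := hadj u hu huD'
    have ⟨hvD, hxv, hvi⟩ := hadj v hv hvD'
    hD.eq_of_adj hx1 hxD huD hvD hiD hxu hxv (hG.adj_of_low_le hix hxi) hui hvi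
  refine le_trans ?_ (Nat.cast_le.mpr (Finset.card_filter_le D (low G · ≤ x)))
  by_cases he : ∃ e ∈ Finset.Ico x i, e ∈ D.filter (low G · ≤ x)
  · obtain ⟨e, he, heD'⟩ := he
    exact g1Split_le_card_of_tail hD' hiD' hix hblock' heD' (Finset.mem_Ico.mp he).1
      (Finset.mem_Ico.mp he).2 fun z hz hzD => htail z hz e he hzD heD'
  · push Not at he
    exact g1Split_le_card_of_block hD' hiD' hix hxi.le hblock' he

theorem GoodNumbering.g1Split_le_card (hG : GoodNumbering G n) (hb : low G i < i)
    (hD : Dom12 G i D) (hiD : i ∈ D) : g1Split G (low G i) i ≤ D.card := by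
  classical
  by_cases hgap : ∃ x, x ∈ Finset.Ico (low G i) i ∧ x ∉ D
  · obtain ⟨hx, hxD⟩ := Nat.find_spec hgap
    refine hG.g1Split_le_card_of_gap hb hD hiD hx hxD fun z hz => ?_
    obtain ⟨hbz, hzx⟩ := Finset.mem_Ico.mp hz
    by_contra hzD
    exact Nat.find_min hgap hzx ⟨Finset.mem_Ico.mpr ⟨hbz, hzx.trans (Finset.mem_Ico.mp hx).2⟩, hzD⟩
  · push Not at hgap
    exact g1Split_le_card_of_block hD hiD hb.le le_rfl hgap (by simp)

end

theorem g1_recurrence_general (G : SimpleGraph ℕ) (n : ℕ)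
    (hG : GoodNumbering G n) (i b : ℕ)
    (hbdef : b = low G i) (hb : b < i) :
    g1 G i =
      sInf {v : ℕ∞ | v = g1I G b i ∨
        (∃ j ∈ Finset.Ico b i, v = g1Ij G b i j) ∨
        (∃ j' ∈ Finset.Ico b i, ∃ k' ∈ Finset.Ico b j',
          v = g1Ijk G b i j' k' ∨ v = g11Ijk G b i j' k')} := by
  subst hbdef
  apply le_antisymm
  · refine le_sInf ?_
    rintro _ (rfl | ⟨j, -, rfl⟩ | ⟨j', -, k', -, rfl | rfl⟩) <;> exact gval_mono fun D h => h.1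
  · exact le_sInf fun _ ⟨D, hD, hiD, hcard⟩ => hcard ▸ hG.g1Split_le_card hb hD hiD

/-- Lemma (ii): if `b = low(i) < i`, then `γ¹_{[1,2]}(i)` is the minimum of
`γ¹_{[1,2]}(b,i:i)`, `γ¹_{[1,2]}(b,i:i,j)` for `b ≤ j < i`, and
`γ¹_{[1,2]}(b,i:i,j',k')`, `γ¹¹_{[1,2]}(b,i:i,j',k')` for `b ≤ k' < j' < i`. -/
theorem g1_recurrence (G : SimpleGraph ℕ) (n : ℕ) (hn : 1 ≤ n)
    (hG : GoodNumbering G n) (i b : ℕ) (hi : i ∈ Finset.Icc 1 n)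
    (hbdef : b = low G i) (hb : b < i) :
    g1 G i =
      sInf {v : ℕ∞ | v = g1I G b i ∨
        (∃ j ∈ Finset.Ico b i, v = g1Ij G b i j) ∨
        (∃ j' ∈ Finset.Ico b i, ∃ k' ∈ Finset.Ico b j',
          v = g1Ijk G b i j' k' ∨ v = g11Ijk G b i j' k')} :=
  g1_recurrence_general G n hG i b hbdef hb
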